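/- Let n ≥ 1, let c̄ ≥ 1 be a natural number, and let S be a finite set of positive integers. Consider the battery-model instance with unit conversion efficiency and no leakage having K = n + 1 slots, capacity C = c̄, initial level B₀ = 0, final requirement B_K = 0, and harvests Q(0) = c̄ and Q(i) = 0 for 1 ≤ i ≤ n. Then a vector s : {0,…,n} → ℕ with s(i) ∈ S ∪ {0} for all i is feasible and satisfies Σ_{i=0}^{n} s(i) ≥ c̄ if and only if s(0) = 0 and Σ_{i=1}^{n} s(i) = c̄. -/

import Mathlib

/-!
In the reduction instance the whole harvest `c̄` arrives in slot `0`, when the battery is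
still empty, so nothing can be spent there. From then on the battery only drains, and its
level after slot `i` is `c̄` minus everything spent so far. Feasibility therefore says exactly
that `s 0 = 0` and the total spending is at most `c̄`; utility at least `c̄` forces equality.
-/

/-- Battery level evolution (in `ℤ`) with unit conversion efficiency and no
leakage: initial level `B₀`, capacity `C`, harvests `Q`, spending vector `s`. -/
def batteryLevelNL (B₀ C : ℕ) (Q : ℕ → ℕ) (s : ℕ → ℕ) : ℕ → ℤ
  | 0 => (B₀ : ℤ)
  | i + 1 => min (batteryLevelNL B₀ C Q s i + (Q i : ℤ) - (s i : ℤ)) (C : ℤ)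

/-- Feasibility of a spending vector `s` over horizon `K`, capacity `C`,
initial level `B₀`, final requirement `BK`, harvests `Q`, and
spending-rate set `S`, with no leakage. -/
def FeasibleNL (K C B₀ BK : ℕ) (Q : ℕ → ℕ) (S : Set ℕ) (s : ℕ → ℕ) : Prop :=
  (∀ i < K, s i ∈ S ∪ {0}) ∧
  (∀ i < K, (s i : ℤ) ≤ batteryLevelNL B₀ C Q s i) ∧
  (∀ i ≤ K, 0 ≤ batteryLevelNL B₀ C Q s i) ∧
  (BK : ℤ) ≤ batteryLevelNL B₀ C Q s K

open Finset

section BatteryLevel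

variable {B₀ C : ℕ} {Q s : ℕ → ℕ}

theorem batteryLevelNL_le_capacity (hB₀ : B₀ ≤ C) :
    ∀ i, batteryLevelNL B₀ C Q s i ≤ C
  | 0 => show (B₀ : ℤ) ≤ C by exact_mod_cast hB₀
  | _ + 1 => min_le_right _ _

theorem batteryLevelNL_succ_of_harvest_eq_zero (hB₀ : B₀ ≤ C) {i : ℕ} (hQ : Q i = 0) :
    batteryLevelNL B₀ C Q s (i + 1) = batteryLevelNL B₀ C Q s i - s i := by
  rw [batteryLevelNL, hQ, Nat.cast_zero, add_zero, min_eq_left]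
  linarith [batteryLevelNL_le_capacity (Q := Q) (s := s) hB₀ i, (s i).cast_nonneg (α := ℤ)]

theorem batteryLevelNL_add_of_harvest_eq_zero (hB₀ : B₀ ≤ C) {m k : ℕ}
    (hQ : ∀ i, m ≤ i → i < m + k → Q i = 0) :
    batteryLevelNL B₀ C Q s (m + k) =
      batteryLevelNL B₀ C Q s m - ∑ i ∈ Ico m (m + k), (s i : ℤ) := by
  induction k with
  | zero => simp
  | succ k ih =>
    rw [← add_assoc, batteryLevelNL_succ_of_harvest_eq_zero hB₀ (hQ _ le_self_add (by omega)),
      ih fun i him hik => hQ i him (by omega), sum_Ico_succ_top le_self_add]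
    ring

theorem batteryLevelNL_of_single_harvest {n : ℕ} (hQ0 : Q 0 = C)
    (hQ : ∀ i, 1 ≤ i → i ≤ n → Q i = 0) (i : ℕ) (hi : 1 ≤ i) (hin : i ≤ n + 1) :
    batteryLevelNL 0 C Q s i = C - ((∑ j ∈ range i, s j : ℕ) : ℤ) := by
  obtain ⟨k, rfl⟩ := Nat.exists_eq_add_of_le hi
  have hlevel_one : batteryLevelNL 0 C Q s 1 = C - s 0 := by
    simp only [batteryLevelNL, hQ0, Nat.cast_zero, zero_add]
    exact min_eq_left (by linarith [(s 0).cast_nonneg (α := ℤ)])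
  rw [batteryLevelNL_add_of_harvest_eq_zero C.zero_le fun j hj hjk => hQ j hj (by omega),
    hlevel_one, ← sum_range_add_sum_Ico _ (by omega : 1 ≤ 1 + k), sum_range_one]
  push_cast
  ring

end BatteryLevel

theorem feasibleNL_single_harvest_iff {n C : ℕ} {S : Set ℕ} {Q s : ℕ → ℕ}
    (hQ0 : Q 0 = C) (hQ : ∀ i, 1 ≤ i → i ≤ n → Q i = 0)
    (hs : ∀ i < n + 1, s i ∈ S ∪ {0}) :
    FeasibleNL (n + 1) C 0 0 Q S s ↔ s 0 = 0 ∧ ∑ i ∈ range (n + 1), s i ≤ C := by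
  have hlevel := batteryLevelNL_of_single_harvest (s := s) hQ0 hQ
  have hpartial : ∀ i ≤ n + 1, ∑ j ∈ range i, s j ≤ ∑ j ∈ range (n + 1), s j := fun i hi =>
    sum_le_sum_of_subset (range_subset_range.mpr hi)
  constructor
  · rintro ⟨-, hspend, -, hfinal⟩
    have hs0 : (s 0 : ℤ) ≤ 0 := hspend 0 n.succ_pos
    rw [hlevel _ le_add_self le_rfl] at hfinal
    omega
  · rintro ⟨hs0, htotal⟩
    refine ⟨hs, fun i hi => ?_, fun i hi => ?_, ?_⟩
    · rcases i with _ | i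
      · simp [batteryLevelNL, hs0]
      · have hprefix := hpartial (i + 2) hi
        rw [sum_range_succ] at hprefix
        rw [hlevel _ le_add_self hi.le]
        omega
    · rcases i with _ | i
      · simp [batteryLevelNL]
      · have hprefix := hpartial (i + 1) hi
        rw [hlevel _ le_add_self hi]
        omega
    · have hprefix := hpartial (n + 1) le_rfl
      rw [hlevel _ le_add_self le_rfl]
      omega

theorem sum_range_succ_eq_add_sum_Icc {M : Type*} [AddCommMonoid M] (f : ℕ → M) (n : ℕ) :
    ∑ i ∈ range (n + 1), f i = f 0 + ∑ i ∈ Icc 1 n, f i := by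
  rw [← Ico_add_one_right_eq_Icc, ← sum_range_add_sum_Ico _ (by omega : 1 ≤ n + 1),
    sum_range_one]

theorem reduction_instance_feasibility_general
    (n : ℕ) (cbar : ℕ)
    (S : Finset ℕ)
    (Q : ℕ → ℕ) (hQ0 : Q 0 = cbar) (hQ : ∀ i, 1 ≤ i → i ≤ n → Q i = 0)
    (s : ℕ → ℕ) (hs : ∀ i < n + 1, s i ∈ (↑S : Set ℕ) ∪ {0}) :
    (FeasibleNL (n + 1) cbar 0 0 Q (↑S) s ∧
        cbar ≤ ∑ i ∈ Finset.range (n + 1), s i) ↔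
      (s 0 = 0 ∧ ∑ i ∈ Finset.Icc 1 n, s i = cbar) := by
  rw [feasibleNL_single_harvest_iff hQ0 hQ hs, sum_range_succ_eq_add_sum_Icc]
  omega

/-- Characterization of the feasible high-utility spending vectors of the
reduction instance: `K = n+1` slots, capacity `c̄`, `B₀ = B_K = 0`, harvests
`Q(0) = c̄` and `Q(i) = 0` for `1 ≤ i ≤ n`. A vector `s` with values in
`S ∪ {0}` is feasible with total spending at least `c̄` iff `s(0) = 0` and
`∑_{i=1}^{n} s(i) = c̄`. -/
theorem reduction_instance_feasibility
    (n : ℕ) (hn : 1 ≤ n) (cbar : ℕ) (hcbar : 1 ≤ cbar)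
    (S : Finset ℕ) (hpos : ∀ x ∈ S, 0 < x)
    (Q : ℕ → ℕ) (hQ0 : Q 0 = cbar) (hQ : ∀ i, 1 ≤ i → i ≤ n → Q i = 0)
    (s : ℕ → ℕ) (hs : ∀ i < n + 1, s i ∈ (↑S : Set ℕ) ∪ {0}) :
    (FeasibleNL (n + 1) cbar 0 0 Q (↑S) s ∧
        cbar ≤ ∑ i ∈ Finset.range (n + 1), s i) ↔
      (s 0 = 0 ∧ ∑ i ∈ Finset.Icc 1 n, s i = cbar) :=
  reduction_instance_feasibility_general n cbar S Q hQ0 hQ s hs
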